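/- With γ_t = γ_{t-1}/(λ_t + α_t^{-2}γ_{t-1}), λ_t = 1 - ν^{t-1}(1-λ₁) for 0 < ν < 1, λ₁ ∈ (0,1), α_t^{-2} = λ₁⋯λ_t, and γ₀ > 0, one has γ_t → 0 and β_t := λ_t/(λ_t + α_t^{-2}γ_{t-1}) → 1 as t → ∞. -/

import Mathlib

open Filter Finset

/-! Since `α t = α (t - 1) * lam t`, the recursion says that `(α t * γ t)⁻¹` grows by exactly `1`
per step, so `α t * γ t = (t + (γ 0)⁻¹)⁻¹`; moreover `β t = 1 - α t * γ t`, whence `β → 1`.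
For `γ → 0` it remains to keep `α` away from `0`: convexity of `s ↦ x ^ s` gives
`lam (i + 1) = 1 - ν ^ i * (1 - lam 1) ≥ lam 1 ^ ν ^ i`, hence
`α t ≥ lam 1 ^ ∑ i < t, ν ^ i ≥ lam 1 ^ (1 - ν)⁻¹`. -/

theorem rpow_le_one_sub_mul_one_sub {x s : ℝ} (hx : 0 ≤ x) (hs0 : 0 ≤ s) (hs1 : s ≤ 1) :
    x ^ s ≤ 1 - s * (1 - x) := by
  have h := Real.geom_mean_le_arith_mean2_weighted hs0 (sub_nonneg.2 hs1) hx zero_le_one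
    (add_sub_cancel s 1)
  rw [Real.one_rpow, mul_one] at h
  linarith

theorem rpow_inv_one_sub_le_prod_one_sub_pow_mul {ν x : ℝ} (hν0 : 0 ≤ ν) (hν1 : ν < 1)
    (hx0 : 0 < x) (hx1 : x ≤ 1) (t : ℕ) :
    x ^ (1 - ν)⁻¹ ≤ ∏ i ∈ range t, (1 - ν ^ i * (1 - x)) := by
  have hgeom : ∑ i ∈ range t, ν ^ i ≤ (1 - ν)⁻¹ := by
    simpa [← range_eq_Ico, one_div] using geom_sum_Ico_le_of_lt_one (m := 0) (n := t) hν0 hν1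
  calc x ^ (1 - ν)⁻¹ ≤ x ^ ∑ i ∈ range t, ν ^ i := Real.rpow_le_rpow_of_exponent_ge hx0 hx1 hgeom
    _ = ∏ i ∈ range t, x ^ ν ^ i := Real.rpow_sum_of_pos hx0 _ _
    _ ≤ ∏ i ∈ range t, (1 - ν ^ i * (1 - x)) :=
      prod_le_prod (fun i _ ↦ by positivity) fun i _ ↦
        rpow_le_one_sub_mul_one_sub hx0.le (pow_nonneg hν0 i) (pow_le_one₀ hν0 hν1.le)

theorem prod_Icc_one_eq_prod_range {M : Type*} [CommMonoid M] (f : ℕ → M) (t : ℕ) :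
    ∏ i ∈ Icc 1 t, f i = ∏ i ∈ range t, f (i + 1) := by
  simp only [← Ico_add_one_right_eq_Icc, prod_Ico_eq_prod_range, Nat.add_sub_cancel, add_comm 1]

section KalmanRecursion

variable {lam α γ : ℕ → ℝ}

theorem kalman_gamma_eq (hlam : ∀ t ≥ 1, 0 < lam t) (hα : ∀ t, α t = ∏ i ∈ Icc 1 t, lam i)
    (hγ0 : 0 < γ 0) (hrec : ∀ t ≥ 1, γ t = γ (t - 1) / (lam t + α t * γ (t - 1))) (t : ℕ) :
    γ t = (α t * (t + (γ 0)⁻¹))⁻¹ := by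
  induction t with
  | zero => simp [hα]
  | succ t ih =>
    have hαpos : 0 < α t := by
      rw [hα]; exact prod_pos fun i hi ↦ hlam i (mem_Icc.1 hi).1
    have hl := hlam (t + 1) le_add_self
    have hαsucc : α (t + 1) = α t * lam (t + 1) := by
      rw [hα, hα, prod_Icc_succ_top le_add_self]
    rw [hrec (t + 1) le_add_self, Nat.add_sub_cancel, ih, hαsucc]
    have : (0 : ℝ) < t + (γ 0)⁻¹ := by positivity
    field_simp
    push_cast
    ring

theorem kalman_beta_add_mul_gamma (hrec : ∀ t ≥ 1, γ t = γ (t - 1) / (lam t + α t * γ (t - 1)))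
    {β : ℕ → ℝ} (hβ : ∀ t ≥ 1, β t = lam t / (lam t + α t * γ (t - 1))) {t : ℕ} (ht : 1 ≤ t)
    (hden : lam t + α t * γ (t - 1) ≠ 0) :
    β t + α t * γ t = 1 := by
  rw [hβ t ht, hrec t ht, mul_div_assoc', ← add_div, div_self hden]

end KalmanRecursion

theorem gamma_tendsto_zero_beta_tendsto_one (ν : ℝ) (hν0 : 0 < ν) (hν1 : ν < 1)
    (lam : ℕ → ℝ) (hl1 : lam 1 ∈ Set.Ioo (0 : ℝ) 1)
    (hlam : ∀ t ≥ 1, lam t = 1 - ν ^ (t - 1) * (1 - lam 1))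
    (α : ℕ → ℝ) (hα : ∀ t, α t = ∏ i ∈ Finset.Icc 1 t, lam i)
    (γ : ℕ → ℝ) (hγ0 : 0 < γ 0)
    (hrec : ∀ t ≥ 1, γ t = γ (t - 1) / (lam t + α t * γ (t - 1)))
    (β : ℕ → ℝ) (hβ : ∀ t ≥ 1, β t = lam t / (lam t + α t * γ (t - 1))) :
    Tendsto γ atTop (nhds 0) ∧ Tendsto β atTop (nhds 1) := by
  obtain ⟨hl0, hl1⟩ := hl1
  have hlam_pos (t : ℕ) (ht : 1 ≤ t) : 0 < lam t := by
    rw [hlam t ht]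
    nlinarith [pow_le_one₀ (n := t - 1) hν0.le hν1.le]
  have hα_ge (t : ℕ) : lam 1 ^ (1 - ν)⁻¹ ≤ α t := by
    rw [hα, prod_Icc_one_eq_prod_range, prod_congr rfl fun i _ ↦ hlam (i + 1) le_add_self]
    exact rpow_inv_one_sub_le_prod_one_sub_pow_mul hν0.le hν1 hl0 hl1.le t
  have hc : 0 < lam 1 ^ (1 - ν)⁻¹ := Real.rpow_pos_of_pos hl0 _
  have hαpos (t : ℕ) : 0 < α t := hc.trans_le (hα_ge t)
  have hγ := kalman_gamma_eq hlam_pos hα hγ0 hrec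
  have hγpos (t : ℕ) : 0 < γ t := by rw [hγ]; have := hαpos t; positivity
  have hαγ (t : ℕ) : α t * γ t = (t + (γ 0)⁻¹)⁻¹ := by
    rw [hγ, mul_inv, mul_inv_cancel_left₀ (hαpos t).ne']
  have htop : Tendsto (fun t : ℕ ↦ (t : ℝ) + (γ 0)⁻¹) atTop atTop :=
    tendsto_atTop_add_const_right _ _ tendsto_natCast_atTop_atTop
  constructor
  · rw [funext hγ]
    refine (tendsto_atTop_mono (fun t ↦ ?_) (htop.const_mul_atTop hc)).inv_tendsto_atTop
    exact mul_le_mul_of_nonneg_right (hα_ge t) (by positivity)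
  · have hβ_eq : β =ᶠ[atTop] fun t ↦ 1 - (t + (γ 0)⁻¹)⁻¹ := by
      filter_upwards [eventually_ge_atTop 1] with t ht
      rw [← hαγ, ← kalman_beta_add_mul_gamma hrec hβ ht, add_sub_cancel_right]
      have := hγpos (t - 1); have := hαpos t; have := hlam_pos t ht
      positivity
    simpa using (htop.inv_tendsto_atTop.const_sub 1).congr' hβ_eq.symm
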